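/- Let A be a commutative noetherian ring, M a finitely generated A-module, F a finitely generated free A-module, and φ: M → F an A-linear map. Then φ is versal if and only if for every finitely generated A-module P, the image of the precomposition map Hom_A(F, P) → Hom_A(M, P), h ↦ h ∘ φ, equals the image of the natural map β_{M,P}: M* ⊗_A P → Hom_A(M, P) determined by β_{M,P}(λ ⊗ p)(m) = λ(m) • p. -/
import Mathlib


open Module LinearMap

/-- A linear map `φ : M → F` is *versal* if every linear map from `M` into a finitely
generated free module factors through `φ`. -/
def IsVersal (A : Type) [CommRing A] {M F : Type} [AddCommGroup M] [Module A M]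
    [AddCommGroup F] [Module A F] (φ : M →ₗ[A] F) : Prop :=
  ∀ (E : Type) [AddCommGroup E] [Module A E] [Module.Free A E] [Module.Finite A E]
    (g : M →ₗ[A] E), ∃ h : F →ₗ[A] E, g = h ∘ₗ φ

open Module LinearMap TensorProduct

/-- The natural map `α_{M,P} : M ⊗ P → Hom(M*, P)`, `α(m ⊗ p)(λ) = λ(m) • p`. -/
noncomputable def alphaMap (A : Type) [CommRing A] (M P : Type) [AddCommGroup M]
    [Module A M] [AddCommGroup P] [Module A P] :
    M ⊗[A] P →ₗ[A] (Module.Dual A M →ₗ[A] P) :=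
  (dualTensorHom A (Module.Dual A M) P) ∘ₗ
    (TensorProduct.map (Module.Dual.eval A M) LinearMap.id)

/-- `G_M(P)` is the image of `α_{M,P} : M ⊗ P → Hom(M*, P)`. -/
noncomputable def GFun (A : Type) [CommRing A] (M P : Type) [AddCommGroup M] [Module A M]
    [AddCommGroup P] [Module A P] : Submodule A (Module.Dual A M →ₗ[A] P) :=
  LinearMap.range (alphaMap A M P)


lemma dualTensorHom_surj (A : Type) [CommRing A] (M N : Type) [AddCommGroup M] [Module A M]
    [AddCommGroup N] [Module A N] [Module.Free A N] [Module.Finite A N] :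
    Function.Surjective (dualTensorHom A M N) := by
  classical
  intro g
  let b := Module.Free.chooseBasis A N
  refine ⟨∑ i, ((b.coord i) ∘ₗ g) ⊗ₜ[A] b i, ?_⟩
  ext m
  simp only [map_sum, dualTensorHom_apply, LinearMap.sum_apply, coe_comp,
    Function.comp_apply, Basis.coord_apply]
  exact b.sum_repr (g m)

/-- `φ : M → F` is versal iff for every finitely generated `P`, the image of the
precomposition map `Hom(F, P) → Hom(M, P)` equals the image of the natural map
`β_{M,P} : M* ⊗ P → Hom(M, P)`. -/
theorem stmt10 (A : Type) [CommRing A] [IsNoetherianRing A]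
    (M F : Type) [AddCommGroup M] [Module A M] [Module.Finite A M]
    [AddCommGroup F] [Module A F] [Module.Free A F] [Module.Finite A F]
    (φ : M →ₗ[A] F) :
    IsVersal A φ ↔
      ∀ (P : Type) [AddCommGroup P] [Module A P] [Module.Finite A P],
        LinearMap.range (LinearMap.lcomp A P φ) =
          LinearMap.range (dualTensorHom A M P) := by
  classical
  constructor
  · intro hv P _ _ _
    apply le_antisymm
    · rintro _ ⟨h, rfl⟩
      let b := Module.Free.chooseBasis A F
      refine ⟨∑ i, ((b.coord i) ∘ₗ φ) ⊗ₜ[A] h (b i), ?_⟩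
      ext m
      simp only [map_sum, dualTensorHom_apply, LinearMap.sum_apply, coe_comp,
        Function.comp_apply, Basis.coord_apply, lcomp_apply]
      simp_rw [← map_smul, ← map_sum, b.sum_repr]
    · rintro _ ⟨t, rfl⟩
      induction t using TensorProduct.induction_on with
      | zero => simp
      | tmul l p =>
        obtain ⟨μ, hμ⟩ := hv A l
        refine ⟨dualTensorHom A F P (μ ⊗ₜ[A] p), ?_⟩
        ext m
        simp [hμ]
      | add x y hx hy =>
        rw [map_add]
        exact Submodule.add_mem _ hx hy
  · intro hr E _ _ _ _ g
    have : g ∈ LinearMap.range (LinearMap.lcomp A E φ) := by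
      rw [hr E]
      exact dualTensorHom_surj A M E g
    obtain ⟨h, hh⟩ := this
    exact ⟨h, hh.symm⟩
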